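/- arXiv:2604.05065 — 2 statements merged into one kernel-verified Lean document; each statement's English description precedes it below -/
import Mathlib

section
/- Let A have SVD A = UΣVᵀ with singular values σ_1 ≥ ... ≥ σ_ℓ > σ_{ℓ+1}, let ⌊A⌋_ℓ = U_ℓ Σ_ℓ V_ℓᵀ be the rank-ℓ truncated SVD, and define the preconditioner P = (1/σ_{ℓ+1}) V_ℓ Σ_ℓ V_ℓᵀ + (I − V_ℓ V_ℓᵀ). Then P is invertible and the singular values of A P⁻¹ are σ_{ℓ+1} (with multiplicity ℓ) together with σ_{ℓ+1}, ..., σ_n; in particular κ(AP⁻¹) = σ_{ℓ+1}/σ_n. -/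
open Matrix

/-- Spectral norm (largest singular value): supremum of ‖Ax‖₂ over euclidean unit vectors. -/
noncomputable def specNorm {m n : Type*} [Fintype m] [Fintype n] (A : Matrix m n ℝ) : ℝ :=
  sSup {r | ∃ x : n → ℝ, (∑ j, x j ^ 2) = 1 ∧ r = Real.sqrt (∑ i, (A.mulVec x i) ^ 2)}

/-- Smallest singular value: infimum of ‖Ax‖₂ over euclidean unit vectors. -/
noncomputable def sMin {m n : Type*} [Fintype m] [Fintype n] (A : Matrix m n ℝ) : ℝ :=
  sInf {r | ∃ x : n → ℝ, (∑ j, x j ^ 2) = 1 ∧ r = Real.sqrt (∑ i, (A.mulVec x i) ^ 2)}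

lemma quadHelp {m n : ℕ} (M : Matrix (Fin m) (Fin n) ℝ) (hM : Mᵀ * M = 1) (x : Fin n → ℝ) :
    ∑ i, (M.mulVec x i) ^ 2 = ∑ j, x j ^ 2 := by
  have h1 : ∀ i, (M.mulVec x i) ^ 2 = ∑ j, ∑ k, (x j * x k) * (M i j * M i k) := by
    intro i
    simp only [Matrix.mulVec, dotProduct, sq, Finset.sum_mul_sum]
    exact Finset.sum_congr rfl fun j _ => Finset.sum_congr rfl fun k _ => by ring
  calc ∑ i, (M.mulVec x i) ^ 2
      = ∑ i, ∑ j, ∑ k, (x j * x k) * (M i j * M i k) :=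
        Finset.sum_congr rfl fun i _ => h1 i
    _ = ∑ j, ∑ k, (x j * x k) * ((Mᵀ * M) j k) := by
        rw [Finset.sum_comm]
        refine Finset.sum_congr rfl fun j _ => ?_
        rw [Finset.sum_comm]
        refine Finset.sum_congr rfl fun k _ => ?_
        rw [← Finset.mul_sum, Matrix.mul_apply]
        simp [Matrix.transpose_apply]
    _ = ∑ j, x j ^ 2 := by
        rw [hM]
        simp [Matrix.one_apply, mul_ite, sq, Finset.sum_ite_eq]

lemma svd_norms {m n : ℕ} (U : Matrix (Fin m) (Fin n) ℝ) (V : Matrix (Fin n) (Fin n) ℝ)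
    (s : Fin n → ℝ) (hU : Uᵀ * U = 1) (hV1 : Vᵀ * V = 1) (hV2 : V * Vᵀ = 1)
    (a b : ℝ) (ha : 0 ≤ a) (hsa : ∀ i, a ≤ s i) (hsb : ∀ i, s i ≤ b)
    (i0 i1 : Fin n) (h0 : s i0 = b) (h1 : s i1 = a) :
    specNorm (U * Matrix.diagonal s * Vᵀ) = b ∧ sMin (U * Matrix.diagonal s * Vᵀ) = a := by
  have hb : 0 ≤ b := le_trans ha (h0 ▸ hsa i0)
  set B := U * Matrix.diagonal s * Vᵀ with hB
  have hVt : Vᵀᵀ * Vᵀ = 1 := by rw [Matrix.transpose_transpose, hV2]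
  have key : ∀ x : Fin n → ℝ, ∑ i, (B.mulVec x i) ^ 2
      = ∑ k, s k ^ 2 * (Vᵀ.mulVec x k) ^ 2 := by
    intro x
    have : B.mulVec x = U.mulVec ((Matrix.diagonal s).mulVec (Vᵀ.mulVec x)) := by
      rw [Matrix.mulVec_mulVec, Matrix.mulVec_mulVec]
    rw [this, quadHelp U hU]
    refine Finset.sum_congr rfl fun k _ => ?_
    rw [Matrix.mulVec_diagonal]
    ring
  set S := {r | ∃ x : Fin n → ℝ, (∑ j, x j ^ 2) = 1 ∧ r = Real.sqrt (∑ i, (B.mulVec x i) ^ 2)}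
     with hS
  have hbound : ∀ r ∈ S, a ≤ r ∧ r ≤ b := by
    rintro r ⟨x, hx, rfl⟩
    have hy : ∑ k, (Vᵀ.mulVec x k) ^ 2 = 1 := by rw [quadHelp Vᵀ hVt, hx]
    rw [key]
    constructor
    · have : a ^ 2 ≤ ∑ k, s k ^ 2 * (Vᵀ.mulVec x k) ^ 2 := by
        calc a ^ 2 = ∑ k, a ^ 2 * (Vᵀ.mulVec x k) ^ 2 := by
              rw [← Finset.mul_sum, hy, mul_one]
          _ ≤ _ := Finset.sum_le_sum fun k _ =>
              mul_le_mul_of_nonneg_right (pow_le_pow_left₀ ha (hsa k) 2)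
                (sq_nonneg _)
      calc a = Real.sqrt (a ^ 2) := by rw [Real.sqrt_sq ha]
        _ ≤ _ := Real.sqrt_le_sqrt this
    · have : ∑ k, s k ^ 2 * (Vᵀ.mulVec x k) ^ 2 ≤ b ^ 2 := by
        calc ∑ k, s k ^ 2 * (Vᵀ.mulVec x k) ^ 2
            ≤ ∑ k, b ^ 2 * (Vᵀ.mulVec x k) ^ 2 := Finset.sum_le_sum fun k _ =>
              mul_le_mul_of_nonneg_right
                (pow_le_pow_left₀ (le_trans ha (hsa k)) (hsb k) 2) (sq_nonneg _)
          _ = b ^ 2 := by rw [← Finset.mul_sum, hy, mul_one]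
      calc Real.sqrt _ ≤ Real.sqrt (b ^ 2) := Real.sqrt_le_sqrt this
        _ = b := Real.sqrt_sq hb
  have hmem : ∀ i2 : Fin n, s i2 ∈ S := by
    intro i2
    refine ⟨fun j => V j i2, ?_, ?_⟩
    · have := congrArg (fun M : Matrix (Fin n) (Fin n) ℝ => M i2 i2) hV1
      simpa [Matrix.mul_apply, Matrix.one_apply, sq] using this
    · have hy : ∀ k, Vᵀ.mulVec (fun j => V j i2) k = if k = i2 then 1 else 0 := by
        intro k
        have := congrArg (fun M : Matrix (Fin n) (Fin n) ℝ => M k i2) hV1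
        simpa [Matrix.mulVec, dotProduct, Matrix.mul_apply, Matrix.one_apply] using this
      rw [key]
      have : ∑ k, s k ^ 2 * (Vᵀ.mulVec (fun j => V j i2) k) ^ 2 = s i2 ^ 2 := by
        rw [Finset.sum_eq_single i2]
        · rw [hy i2]; simp
        · intro k _ hk; rw [hy k]; simp [hk]
        · simp
      rw [this, Real.sqrt_sq (le_trans ha (hsa i2))]
  have hbS : b ∈ S := h0 ▸ hmem i0
  have haS : a ∈ S := h1 ▸ hmem i1
  constructor
  · refine le_antisymm (csSup_le ⟨b, hbS⟩ fun r hr => (hbound r hr).2) ?_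
    exact le_csSup ⟨b, fun r hr => (hbound r hr).2⟩ hbS
  · refine le_antisymm (csInf_le ⟨a, fun r hr => (hbound r hr).1⟩ haS) ?_
    exact le_csInf ⟨a, haS⟩ fun r hr => (hbound r hr).1

lemma sum_castLE {ℓ n : ℕ} (h : ℓ ≤ n) (G : Fin n → ℝ)
    (hG : ∀ k : Fin n, ℓ ≤ (k : ℕ) → G k = 0) :
    ∑ k : Fin n, G k = ∑ k : Fin ℓ, G (Fin.castLE h k) := by
  set G' : ℕ → ℝ := fun k => if hk : k < n then G ⟨k, hk⟩ else 0 with hG'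
  have e1 : ∑ k : Fin n, G k = ∑ k ∈ Finset.range n, G' k := by
    rw [← Fin.sum_univ_eq_sum_range]
    exact Finset.sum_congr rfl fun k _ => by simp [hG', k.isLt]
  have e2 : ∑ k : Fin ℓ, G (Fin.castLE h k) = ∑ k ∈ Finset.range ℓ, G' k := by
    rw [← Fin.sum_univ_eq_sum_range]
    refine Finset.sum_congr rfl fun k _ => ?_
    have hk : (k : ℕ) < n := lt_of_lt_of_le k.isLt h
    simp only [hG', dif_pos hk]
    rfl
  rw [e1, e2]
  exact (Finset.sum_subset (Finset.range_subset_range.2 h) (fun k hk hk' => by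
    simp only [Finset.mem_range, not_lt] at hk hk'
    simp only [hG', dif_pos hk]
    exact hG _ hk')).symm

lemma Vl_diag {ℓ n : ℕ} (hℓ : ℓ < n) (V : Matrix (Fin n) (Fin n) ℝ)
    (Vl : Matrix (Fin n) (Fin ℓ) ℝ) (hVl : ∀ i j, Vl i j = V i (Fin.castLE hℓ.le j))
    (f : Fin n → ℝ) :
    Vl * Matrix.diagonal (fun j : Fin ℓ => f (Fin.castLE hℓ.le j)) * Vlᵀ
    = V * Matrix.diagonal (fun k : Fin n => if (k : ℕ) < ℓ then f k else 0) * Vᵀ := by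
  ext i j
  rw [Matrix.mul_apply, Matrix.mul_apply]
  rw [sum_castLE hℓ.le (fun k => (V * Matrix.diagonal fun k : Fin n =>
      if (k : ℕ) < ℓ then f k else 0) i k * Vᵀ k j)
    (fun k hk => by simp [Matrix.mul_diagonal, not_lt.2 hk])]
  refine Finset.sum_congr rfl fun k _ => ?_
  simp [Matrix.mul_diagonal, Matrix.transpose_apply, hVl, k.isLt]

noncomputable section

theorem ideal_rank_l_preconditioner {m n ℓ : ℕ} (hℓ : ℓ < n)
    (A U : Matrix (Fin m) (Fin n) ℝ) (V : Matrix (Fin n) (Fin n) ℝ)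
    (σ : Fin n → ℝ) (hσanti : Antitone σ) (hσpos : ∀ i, 0 < σ i)
    (hU : Uᵀ * U = 1) (hV1 : Vᵀ * V = 1) (hV2 : V * Vᵀ = 1)
    (hSVD : A = U * Matrix.diagonal σ * Vᵀ)
    -- V_ℓ : first ℓ right singular vectors
    (Vl : Matrix (Fin n) (Fin ℓ) ℝ)
    (hVl : Vl = fun i j => V i (Fin.castLE hℓ.le j))
    (P : Matrix (Fin n) (Fin n) ℝ)
    (hP : P = (σ ⟨ℓ, hℓ⟩)⁻¹ •
        (Vl * Matrix.diagonal (fun j : Fin ℓ => σ (Fin.castLE hℓ.le j)) * Vlᵀ)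
        + (1 - Vl * Vlᵀ)) :
    IsUnit P ∧
    (∃ (U' : Matrix (Fin m) (Fin n) ℝ) (V' : Matrix (Fin n) (Fin n) ℝ),
      U'ᵀ * U' = 1 ∧ V'ᵀ * V' = 1 ∧ V' * V'ᵀ = 1 ∧
      A * P⁻¹ = U' * Matrix.diagonal
          (fun i : Fin n => if (i : ℕ) < ℓ then σ ⟨ℓ, hℓ⟩ else σ i) * V'ᵀ) ∧
    specNorm (A * P⁻¹) / sMin (A * P⁻¹) = σ ⟨ℓ, hℓ⟩ / σ ⟨n - 1, by omega⟩ := by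
  have hVl' : ∀ i j, Vl i j = V i (Fin.castLE hℓ.le j) := fun i j => by rw [hVl]
  set σℓ := σ ⟨ℓ, hℓ⟩ with hσℓdef
  have hσℓ : 0 < σℓ := hσpos _
  set d : Fin n → ℝ := fun k => if (k : ℕ) < ℓ then σℓ⁻¹ * σ k else 1 with hd_def
  have hd : ∀ k, d k ≠ 0 := by
    intro k
    by_cases hk : (k : ℕ) < ℓ
    · simp only [hd_def, if_pos hk]
      exact mul_ne_zero (inv_ne_zero hσℓ.ne') (hσpos k).ne'
    · simp [hd_def, hk]
  -- P = V * diagonal d * Vᵀ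
  have hPV : P = V * Matrix.diagonal d * Vᵀ := by
    have hVlVl : Vl * Vlᵀ
        = V * Matrix.diagonal (fun k : Fin n => if (k : ℕ) < ℓ then (1:ℝ) else 0) * Vᵀ := by
      have := Vl_diag hℓ V Vl hVl' (fun _ => (1:ℝ))
      simpa using this
    rw [hP, Vl_diag hℓ V Vl hVl' σ, hVlVl]
    have h1 : (1 : Matrix (Fin n) (Fin n) ℝ)
        = V * Matrix.diagonal (fun _ : Fin n => (1:ℝ)) * Vᵀ := by
      rw [Matrix.diagonal_one, Matrix.mul_one, hV2]
    rw [h1]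
    have hdiag : Matrix.diagonal d
        = σℓ⁻¹ • Matrix.diagonal (fun k : Fin n => if (k : ℕ) < ℓ then σ k else 0)
          + (Matrix.diagonal (fun _ : Fin n => (1:ℝ))
            - Matrix.diagonal (fun k : Fin n => if (k : ℕ) < ℓ then (1:ℝ) else 0)) := by
      have hfun : d = σℓ⁻¹ • (fun k : Fin n => if (k : ℕ) < ℓ then σ k else 0)
          + ((fun _ : Fin n => (1:ℝ)) - fun k : Fin n => if (k : ℕ) < ℓ then (1:ℝ) else 0) := by
        funext k
        by_cases hk : (k : ℕ) < ℓ <;>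
          simp [hd_def, hk, Pi.add_apply, Pi.sub_apply, Pi.smul_apply, smul_eq_mul]
      rw [hfun]
      ext i j
      by_cases hij : i = j
      · subst hij; simp [Matrix.diagonal_apply_eq]
      · simp [Matrix.diagonal_apply_ne _ hij, hij]
    rw [hdiag]
    simp only [Matrix.mul_add, Matrix.add_mul, Matrix.mul_sub, Matrix.sub_mul,
      mul_smul_comm, smul_mul_assoc]
  set Q : Matrix (Fin n) (Fin n) ℝ := V * Matrix.diagonal (fun k => (d k)⁻¹) * Vᵀ with hQ_def
  have hPQ : P * Q = 1 := by
    rw [hPV, hQ_def]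
    calc V * Matrix.diagonal d * Vᵀ * (V * Matrix.diagonal (fun k => (d k)⁻¹) * Vᵀ)
        = V * Matrix.diagonal d * ((Vᵀ * V) * (Matrix.diagonal (fun k => (d k)⁻¹) * Vᵀ)) := by
          simp only [Matrix.mul_assoc]
      _ = V * (Matrix.diagonal d * Matrix.diagonal (fun k => (d k)⁻¹)) * Vᵀ := by
          rw [hV1, Matrix.one_mul]
          simp only [Matrix.mul_assoc]
      _ = V * Vᵀ := by
          rw [Matrix.diagonal_mul_diagonal]
          have : (fun k => d k * (d k)⁻¹) = fun _ : Fin n => (1:ℝ) := by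
            funext k; exact mul_inv_cancel₀ (hd k)
          rw [this, Matrix.diagonal_one, Matrix.mul_one]
      _ = 1 := hV2
  have hQP : Q * P = 1 := mul_eq_one_comm.mp hPQ
  have hUnit : IsUnit P := ⟨⟨P, Q, hPQ, hQP⟩, rfl⟩
  have hPinv : P⁻¹ = Q := Matrix.inv_eq_right_inv hPQ
  set σ' : Fin n → ℝ := fun i : Fin n => if (i : ℕ) < ℓ then σ ⟨ℓ, hℓ⟩ else σ i with hσ'def
  have hAP : A * P⁻¹ = U * Matrix.diagonal σ' * Vᵀ := by
    rw [hPinv, hQ_def, hSVD]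
    calc U * Matrix.diagonal σ * Vᵀ * (V * Matrix.diagonal (fun k => (d k)⁻¹) * Vᵀ)
        = U * Matrix.diagonal σ * ((Vᵀ * V) * (Matrix.diagonal (fun k => (d k)⁻¹) * Vᵀ)) := by
          simp only [Matrix.mul_assoc]
      _ = U * (Matrix.diagonal σ * Matrix.diagonal (fun k => (d k)⁻¹)) * Vᵀ := by
          rw [hV1, Matrix.one_mul]
          simp only [Matrix.mul_assoc]
      _ = U * Matrix.diagonal σ' * Vᵀ := by
          rw [Matrix.diagonal_mul_diagonal]
          have hfun : (fun k => σ k * (d k)⁻¹) = σ' := by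
            funext k
            by_cases hk : (k : ℕ) < ℓ
            · simp only [hd_def, hσ'def, if_pos hk, _root_.mul_inv_rev, inv_inv]
              rw [← mul_assoc, mul_inv_cancel₀ (hσpos k).ne', one_mul, hσℓdef]
            · simp [hd_def, hσ'def, hk]
          rw [hfun]
  -- bounds for σ'
  have hnn : (0:ℕ) < n := by omega
  have hsa : ∀ i, σ ⟨n-1, by omega⟩ ≤ σ' i := by
    intro i
    by_cases hk : (i : ℕ) < ℓ
    · simp only [hσ'def, if_pos hk]
      exact hσanti (by simp [Fin.le_def]; omega)
    · simp only [hσ'def, if_neg hk]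
      exact hσanti (by simp [Fin.le_def]; omega)
  have hsb : ∀ i, σ' i ≤ σℓ := by
    intro i
    by_cases hk : (i : ℕ) < ℓ
    · simp only [hσ'def, if_pos hk]; exact le_rfl
    · simp only [hσ'def, if_neg hk]
      exact hσanti (by simp [Fin.le_def]; omega)
  have h0 : σ' ⟨0, hnn⟩ = σℓ := by
    simp only [hσ'def]
    by_cases h : 0 < ℓ
    · rw [if_pos (show ((⟨0, hnn⟩ : Fin n) : ℕ) < ℓ from h)]
    · rw [if_neg (show ¬ ((⟨0, hnn⟩ : Fin n) : ℕ) < ℓ from h)]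
      rw [hσℓdef]
      congr 1
      exact Fin.ext (by simp; omega)
  have h1 : σ' ⟨n-1, by omega⟩ = σ ⟨n-1, by omega⟩ := by
    simp only [hσ'def]
    rw [if_neg (show ¬ ((⟨n-1, by omega⟩ : Fin n) : ℕ) < ℓ by simp; omega)]
  obtain ⟨e1, e2⟩ := svd_norms U V σ' hU hV1 hV2 (σ ⟨n-1, by omega⟩) σℓ
    (hσpos _).le hsa hsb ⟨0, hnn⟩ ⟨n-1, by omega⟩ h0 h1
  refine ⟨hUnit, ⟨U, V, hU, hV1, hV2, hAP⟩, ?_⟩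
  rw [hAP, e1, e2]
end
end

section
/- Let M = Û_M Σ̂_M V̂_Mᵀ be an SVD of an invertible ℓ×ℓ matrix M, let Q_R ∈ ℝ^{n×ℓ} have orthonormal columns, and set V̂ = Q_R V̂_M, σ̂ > 0. Define P̃⁻¹ = σ̂ Q_R M⁻¹ Q_Rᵀ + (I − Q_R Q_Rᵀ) and P⁻¹ = σ̂ V̂ Σ̂_M⁻¹ V̂ᵀ + (I − V̂V̂ᵀ). Then P̃⁻¹ = P⁻¹ W, where W = V̂ (Û_Mᵀ V̂_M) V̂ᵀ + (I − V̂V̂ᵀ) is an orthogonal matrix. -/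
open Matrix

noncomputable section

theorem svd_free_preconditioner_equivalence {n ℓ : ℕ}
    (M : Matrix (Fin ℓ) (Fin ℓ) ℝ) (hM : IsUnit M)
    (UM VM : Matrix (Fin ℓ) (Fin ℓ) ℝ)
    (hUM1 : UMᵀ * UM = 1) (hUM2 : UM * UMᵀ = 1)
    (hVM1 : VMᵀ * VM = 1) (hVM2 : VM * VMᵀ = 1)
    (s : Fin ℓ → ℝ) (hs : ∀ i, 0 < s i)
    (hSVD : M = UM * Matrix.diagonal s * VMᵀ)
    (QR : Matrix (Fin n) (Fin ℓ) ℝ) (hQR : QRᵀ * QR = 1)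
    (σh : ℝ) (hσh : 0 < σh)
    (Vh : Matrix (Fin n) (Fin ℓ) ℝ) (hVh : Vh = QR * VM)
    (Ptinv Pinv W : Matrix (Fin n) (Fin n) ℝ)
    (hPtinv : Ptinv = σh • (QR * M⁻¹ * QRᵀ) + (1 - QR * QRᵀ))
    (hPinv : Pinv = σh • (Vh * Matrix.diagonal (fun i => (s i)⁻¹) * Vhᵀ) + (1 - Vh * Vhᵀ))
    (hW : W = Vh * (UMᵀ * VM) * Vhᵀ + (1 - Vh * Vhᵀ)) :
    Ptinv = Pinv * W ∧ Wᵀ * W = 1 ∧ W * Wᵀ = 1 := by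
  have hMinv : M⁻¹ = VM * Matrix.diagonal (fun i => (s i)⁻¹) * UMᵀ := by
    apply Matrix.inv_eq_right_inv
    rw [hSVD]
    have : Matrix.diagonal s * (VMᵀ * (VM * Matrix.diagonal (fun i => (s i)⁻¹))) =
        (1 : Matrix (Fin ℓ) (Fin ℓ) ℝ) := by
      rw [← Matrix.mul_assoc VMᵀ, hVM1, Matrix.one_mul, Matrix.diagonal_mul_diagonal]
      convert Matrix.diagonal_one using 2
      exact funext fun i => mul_inv_cancel₀ (hs i).ne'
    calc UM * Matrix.diagonal s * VMᵀ * (VM * Matrix.diagonal (fun i => (s i)⁻¹) * UMᵀ)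
        = UM * (Matrix.diagonal s * (VMᵀ * (VM * Matrix.diagonal (fun i => (s i)⁻¹)))) * UMᵀ := by
          simp only [Matrix.mul_assoc]
      _ = 1 := by rw [this, Matrix.mul_one, hUM2]
  have c1 : ∀ {m : Type} [Fintype m] (X : Matrix (Fin ℓ) m ℝ), QRᵀ * (QR * X) = X := by
    intro m _ X; rw [← Matrix.mul_assoc, hQR, Matrix.one_mul]
  have c2 : ∀ {m : Type} [Fintype m] (X : Matrix (Fin ℓ) m ℝ), VMᵀ * (VM * X) = X := by
    intro m _ X; rw [← Matrix.mul_assoc, hVM1, Matrix.one_mul]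
  have c3 : ∀ {m : Type} [Fintype m] (X : Matrix (Fin ℓ) m ℝ), VM * (VMᵀ * X) = X := by
    intro m _ X; rw [← Matrix.mul_assoc, hVM2, Matrix.one_mul]
  have c4 : ∀ {m : Type} [Fintype m] (X : Matrix (Fin ℓ) m ℝ), UM * (UMᵀ * X) = X := by
    intro m _ X; rw [← Matrix.mul_assoc, hUM2, Matrix.one_mul]
  have c5 : ∀ {m : Type} [Fintype m] (X : Matrix (Fin ℓ) m ℝ), UMᵀ * (UM * X) = X := by
    intro m _ X; rw [← Matrix.mul_assoc, hUM1, Matrix.one_mul]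
  subst hVh hPtinv hPinv hW
  refine ⟨?_, ?_, ?_⟩ <;>
  · try rw [hMinv]
    simp only [Matrix.transpose_mul, Matrix.transpose_one, Matrix.transpose_sub, Matrix.transpose_add, Matrix.transpose_smul, Matrix.transpose_transpose,
      Matrix.mul_add, Matrix.add_mul, Matrix.mul_sub, Matrix.sub_mul,
      Matrix.smul_mul, Matrix.mul_smul, Matrix.mul_one, Matrix.one_mul,
      Matrix.mul_assoc, c1, c2, c3, c4, c5, hQR, hVM1, hVM2, hUM1, hUM2,
      smul_add, smul_sub]
    abel
end
end
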